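/- arXiv:2002.07344 — 4 statements merged into one kernel-verified Lean document; each statement's English description precedes it below -/
import Mathlib

section
/- Let q ∈ ℂ× not a root of unity, ζ ∈ ℂ×, and let Q₊, Q₋, Λ ∈ ℂ[z] satisfy the QQ-system ζ Q₋(z) Q₊(qz) − ζ⁻¹ Q₋(qz) Q₊(z) = Λ(z). Suppose w is a root of Q₊ such that Λ(w) ≠ 0, Λ(q⁻¹w) ≠ 0, Q₋(w) ≠ 0, Q₊(qw) ≠ 0 and Q₊(q⁻¹w) ≠ 0. Then the Bethe Ansatz equation Λ(w)/Λ(q⁻¹w) = −ζ² · Q₊(qw)/Q₊(q⁻¹w) holds. -/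
/-! At a root `w` of `Q₊` one of the two terms of the QQ-system vanishes, both at `z = w` and at
`z = q⁻¹w`, so `Λ(w) = ζ Q₋(w) Q₊(qw)` and `Λ(q⁻¹w) = -ζ⁻¹ Q₋(w) Q₊(q⁻¹w)`. The second product is nonzero,
so `ζ`, `Q₋(w)` and `Q₊(q⁻¹w)` are, and dividing cancels the common factor `Q₋(w)`. -/

open Polynomial

namespace Polynomial

variable {R : Type*} [CommRing R]

noncomputable def qqSystem (a b q : R) (Qp Qm : R[X]) : R[X] :=
  C a * Qm * Qp.comp (C q * X) - C b * Qm.comp (C q * X) * Qp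

theorem eval_qqSystem (a b q x : R) (Qp Qm : R[X]) :
    (qqSystem a b q Qp Qm).eval x =
      a * Qm.eval x * Qp.eval (q * x) - b * Qm.eval (q * x) * Qp.eval x := by
  simp [qqSystem, eval_comp]

theorem eval_qqSystem_of_eval_eq_zero {a b q w : R} {Qp : R[X]} (Qm : R[X])
    (hw : Qp.eval w = 0) :
    (qqSystem a b q Qp Qm).eval w = a * Qm.eval w * Qp.eval (q * w) := by
  simp [eval_qqSystem, hw]

theorem eval_qqSystem_of_mul_eq_of_eval_eq_zero {a b q w v : R} {Qp : R[X]} (Qm : R[X])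
    (hw : Qp.eval w = 0) (hv : q * v = w) :
    (qqSystem a b q Qp Qm).eval v = -(b * Qm.eval w * Qp.eval v) := by
  simp [eval_qqSystem, hv, hw]

end Polynomial

theorem stmt_6_general (q ζ : ℂ) (hq0 : q ≠ 0)
    (Qp Qm Lam : ℂ[X])
    (hQQ : C ζ * Qm * Qp.comp (C q * X) - C ζ⁻¹ * Qm.comp (C q * X) * Qp = Lam)
    (w : ℂ) (hw : Qp.eval w = 0)
    (h2 : Lam.eval (q⁻¹ * w) ≠ 0) :
    Lam.eval w / Lam.eval (q⁻¹ * w) =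
      -ζ ^ 2 * (Qp.eval (q * w) / Qp.eval (q⁻¹ * w)) := by
  change qqSystem ζ ζ⁻¹ q Qp Qm = Lam at hQQ
  subst hQQ
  rw [eval_qqSystem_of_eval_eq_zero Qm hw,
    eval_qqSystem_of_mul_eq_of_eval_eq_zero Qm hw (mul_inv_cancel_left₀ hq0 w)] at *
  obtain ⟨⟨hζ, hQm⟩, hQp⟩ : (ζ ≠ 0 ∧ Qm.eval w ≠ 0) ∧ Qp.eval (q⁻¹ * w) ≠ 0 := by
    simpa only [neg_ne_zero, mul_ne_zero_iff, ne_eq, inv_eq_zero] using h2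
  field_simp

theorem stmt_6 (q ζ : ℂ) (hq0 : q ≠ 0) (hq : ∀ n : ℕ, 0 < n → q ^ n ≠ 1) (hζ : ζ ≠ 0)
    (Qp Qm Lam : ℂ[X])
    (hQQ : C ζ * Qm * Qp.comp (C q * X) - C ζ⁻¹ * Qm.comp (C q * X) * Qp = Lam)
    (w : ℂ) (hw : Qp.eval w = 0)
    (h1 : Lam.eval w ≠ 0) (h2 : Lam.eval (q⁻¹ * w) ≠ 0) (h3 : Qm.eval w ≠ 0)
    (h4 : Qp.eval (q * w) ≠ 0) (h5 : Qp.eval (q⁻¹ * w) ≠ 0) :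
    Lam.eval w / Lam.eval (q⁻¹ * w) =
      -ζ ^ 2 * (Qp.eval (q * w) / Qp.eval (q⁻¹ * w)) :=
  stmt_6_general q ζ hq0 Qp Qm Lam hQQ w hw h2
end

section
/- Let q ∈ ℂ× not a root of unity. Call two nonzero complex numbers v, w q-distinct if qᵐ v ≠ qⁿ w for all integers m, n. Let Λ, P₁, P₂ ∈ ℂ[z] be nonzero with P₁ and P₂ coprime, and suppose the roots of Λ are q-distinct from the roots of P₁ and of P₂. Let h ∈ ℂ[z] be a nonzero polynomial such that h(z)·P₁(z)/P₂(z) is a polynomial and the roots of h(z)h(qz)Λ(z) are q-distinct from the zeros and poles of h(z)P₁(z)/P₂(z). Then h(z) = a·P₂(z) for some a ∈ ℂ×. -/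
/-! Since `P₁` and `P₂` are coprime, `h P₁ = y P₂` forces `h = g P₂` and `y = g P₁` for a polynomial
`g`. A root of `g` would be a common root of `h` and `y`, which the last q-distinctness hypothesis
forbids (take `m = n = 0`); so `g` is a nonzero constant. -/

open Polynomial

theorem IsCoprime.exists_eq_mul_of_mul_eq_mul {R : Type*} [CommRing R] [IsDomain R]
    {a b c d : R} (hab : IsCoprime a b) (hb : b ≠ 0) (h : c * a = d * b) :
    ∃ g, c = g * b ∧ d = g * a := by
  obtain ⟨g, rfl⟩ := hab.symm.dvd_of_dvd_mul_right ⟨d, by rw [h, mul_comm]⟩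
  refine ⟨g, mul_comm _ _, mul_right_cancel₀ hb ?_⟩
  rw [← h]
  ring

theorem Polynomial.exists_eq_C_of_forall_eval_ne_zero {k : Type*} [Field k] [IsAlgClosed k]
    {p : k[X]} (hp : ∀ z, p.eval z ≠ 0) : ∃ a, a ≠ 0 ∧ p = C a := by
  have hdeg : p.degree = 0 := by
    by_contra hne
    obtain ⟨z, hz⟩ := IsAlgClosed.exists_root p hne
    exact hp z hz
  refine ⟨p.coeff 0, fun h0 => hp 0 ?_, eq_C_of_degree_eq_zero hdeg⟩
  rw [eq_C_of_degree_eq_zero hdeg, h0, C_0, eval_zero]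

theorem stmt_8_general (q : ℂ)
    (Lam P1 P2 h y : ℂ[X]) (hP2 : P2 ≠ 0)
    (hcop : IsCoprime P1 P2)
    -- `h·P₁/P₂` is the polynomial `y`
    (hy : h * P1 = y * P2)
    -- the roots of `h(z)h(qz)Λ(z)` are q-distinct from the zeros of `h·P₁/P₂`
    (hdist3 : ∀ x z : ℂ, (h * h.comp (C q * X) * Lam).eval x = 0 → y.eval z = 0 →
      ∀ m n : ℤ, q ^ m * x ≠ q ^ n * z) :
    ∃ a : ℂ, a ≠ 0 ∧ h = C a * P2 := by
  obtain ⟨g, rfl, rfl⟩ := hcop.exists_eq_mul_of_mul_eq_mul hP2 hy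
  have hg : ∀ z, g.eval z ≠ 0 := fun z hz =>
    hdist3 z z (by simp [hz]) (by simp [hz]) 0 0 rfl
  obtain ⟨a, ha, rfl⟩ := exists_eq_C_of_forall_eval_ne_zero hg
  exact ⟨a, ha, rfl⟩

theorem stmt_8 (q : ℂ) (hq0 : q ≠ 0) (hq : ∀ n : ℕ, 0 < n → q ^ n ≠ 1)
    (Lam P1 P2 h y : ℂ[X]) (hLam : Lam ≠ 0) (hP1 : P1 ≠ 0) (hP2 : P2 ≠ 0) (hh : h ≠ 0)
    (hcop : IsCoprime P1 P2)
    (hdist1 : ∀ x z : ℂ, Lam.eval x = 0 → P1.eval z = 0 → ∀ m n : ℤ, q ^ m * x ≠ q ^ n * z)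
    (hdist2 : ∀ x z : ℂ, Lam.eval x = 0 → P2.eval z = 0 → ∀ m n : ℤ, q ^ m * x ≠ q ^ n * z)
    -- `h·P₁/P₂` is the polynomial `y`
    (hy : h * P1 = y * P2)
    -- the roots of `h(z)h(qz)Λ(z)` are q-distinct from the zeros of `h·P₁/P₂`
    (hdist3 : ∀ x z : ℂ, (h * h.comp (C q * X) * Lam).eval x = 0 → y.eval z = 0 →
      ∀ m n : ℤ, q ^ m * x ≠ q ^ n * z) :
    ∃ a : ℂ, a ≠ 0 ∧ h = C a * P2 :=
  stmt_8_general q Lam P1 P2 h y hP2 hcop hy hdist3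
end

section
/- Let q, ζ ∈ ℂ×, q not a root of unity, and let Q₊, Q₋, Λ ∈ ℂ(z) be nonzero rational functions satisfying ζ Q₋(z) Q₊(qz) − ζ⁻¹ Q₋(qz) Q₊(z) = Λ(z). Set u(z) = −ζ Q₊(qz) Q₊(z)⁻¹ Λ(z)⁻¹ and define T(z) = ζ Q₊(q²z)/(Λ(qz) Q₊(qz)) + ζ⁻¹ Q₊(z)/(Λ(z) Q₊(qz)). Then the 2×2 matrix identity holds: n₋(u(qz)) · C(z) · n₋(−u(z)) = A(z), where C(z) is the matrix with rows (0, Λ(z)) and (−Λ(z)⁻¹, Λ(z)T(z)), n₋(x) is lower unitriangular with (2,1)-entry x, and A(z) is upper triangular with diagonal (ζ Q₊(qz)/Q₊(z), ζ⁻¹ Q₊(z)/Q₊(qz)) and (1,2)-entry Λ(z). -/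
open Polynomial

/-!
Left multiplication by `n₋(x)` and right multiplication by `n₋(y)` change the companion-type
matrix `!![0, Λ; -Λ⁻¹, Λ T]` only through the combination `Λ (x + T)`. For `x = σ u` the
`Q₊(q²z)` terms cancel, leaving `σ u + T = ζ⁻¹ Q₊ / (Λ σ Q₊)`, and then the `(2,1)` entry
`Λ (σ u + T) (-u) - Λ⁻¹` vanishes.
-/

/-- The substitution homomorphism `f(z) ↦ f(qz)` on rational functions. -/
noncomputable def qSubst (q : ℂ) (hq : q ≠ 0) : RatFunc ℂ →+* RatFunc ℂ :=
  RatFunc.liftRingHom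
    ((algebraMap ℂ[X] (RatFunc ℂ)).comp (eval₂RingHom Polynomial.C (Polynomial.C q * Polynomial.X)))
    (by
      intro p hp
      simp only [Submonoid.mem_comap, RingHom.coe_comp, Function.comp_apply]
      rw [mem_nonZeroDivisors_iff_ne_zero] at hp ⊢
      intro hcon
      apply hp
      rw [map_eq_zero_iff _ (IsFractionRing.injective ℂ[X] (RatFunc ℂ))] at hcon
      have hc : p.comp (Polynomial.C q * Polynomial.X) = 0 := hcon
      rcases Polynomial.comp_eq_zero_iff.mp hc with h | ⟨-, h⟩
      · exact h
      · exfalso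
        apply_fun (fun r => r.coeff 1) at h
        simp [Polynomial.coeff_C, hq] at h)

theorem qSubst_algebraMap (q : ℂ) (hq : q ≠ 0) (p : ℂ[X]) :
    qSubst q hq (algebraMap ℂ[X] (RatFunc ℂ) p) =
      algebraMap ℂ[X] (RatFunc ℂ) (p.comp (Polynomial.C q * Polynomial.X)) := by
  rw [← div_one (algebraMap ℂ[X] (RatFunc ℂ) p), ← map_one (algebraMap ℂ[X] (RatFunc ℂ)), qSubst,
    RatFunc.liftRingHom_apply_div]
  simp [Polynomial.comp]

theorem qSubst_C (q : ℂ) (hq : q ≠ 0) (c : ℂ) : qSubst q hq (RatFunc.C c) = RatFunc.C c := by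
  rw [← RatFunc.algebraMap_C, qSubst_algebraMap, Polynomial.C_comp]

theorem lowerUnitriangular_mul_mul_lowerUnitriangular {R : Type*} [CommRing R] (x y a b c : R) :
    !![1, 0; x, 1] * !![0, a; b, a * c] * !![1, 0; y, 1] =
      !![a * y, a; a * (x + c) * y + b, a * (x + c)] := by
  rw [Matrix.mul_fin_two, Matrix.mul_fin_two]
  ext i j
  fin_cases i <;> fin_cases j <;> simp <;> ring

theorem stmt_12_general (q ζ : ℂ) (hq0 : q ≠ 0) (hζ : ζ ≠ 0)
    (Qp Lam : RatFunc ℂ) (hQp : Qp ≠ 0) (hLam : Lam ≠ 0) :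
    let σ := qSubst q hq0
    let u : RatFunc ℂ := -(RatFunc.C ζ) * σ Qp * Qp⁻¹ * Lam⁻¹
    let T : RatFunc ℂ := RatFunc.C ζ * σ (σ Qp) / (σ Lam * σ Qp) +
      RatFunc.C ζ⁻¹ * Qp / (Lam * σ Qp)
    !![1, 0; σ u, 1] * !![0, Lam; -Lam⁻¹, Lam * T] * !![1, 0; -u, 1] =
      !![RatFunc.C ζ * σ Qp / Qp, Lam; 0, RatFunc.C ζ⁻¹ * Qp / σ Qp] := by
  intro σ u T
  have hCζ : RatFunc.C ζ ≠ 0 := by simpa using hζ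
  have hσQp : σ Qp ≠ 0 := (map_ne_zero_iff σ σ.injective).mpr hQp
  have hσLam : σ Lam ≠ 0 := (map_ne_zero_iff σ σ.injective).mpr hLam
  have hσu_add_T : σ u + T = RatFunc.C ζ⁻¹ * Qp / (Lam * σ Qp) := by
    simp only [u, T, map_mul, map_neg, map_inv₀, qSubst_C, σ]
    field_simp
    ring
  have h11 : Lam * -u = RatFunc.C ζ * σ Qp / Qp := by
    simp only [u]
    field_simp
  have h22 : Lam * (σ u + T) = RatFunc.C ζ⁻¹ * Qp / σ Qp := by
    rw [hσu_add_T]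
    field_simp
  have h21 : Lam * (σ u + T) * -u + -Lam⁻¹ = 0 := by
    rw [h22]
    simp only [u, map_inv₀]
    field_simp
    ring
  rw [lowerUnitriangular_mul_mul_lowerUnitriangular, h11, h21, h22]

theorem stmt_12 (q ζ : ℂ) (hq0 : q ≠ 0) (hq : ∀ n : ℕ, 0 < n → q ^ n ≠ 1) (hζ : ζ ≠ 0)
    (Qp Qm Lam : RatFunc ℂ) (hQp : Qp ≠ 0) (hQm : Qm ≠ 0) (hLam : Lam ≠ 0)
    (hQQ : RatFunc.C ζ * Qm * qSubst q hq0 Qp -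
      RatFunc.C ζ⁻¹ * qSubst q hq0 Qm * Qp = Lam) :
    let σ := qSubst q hq0
    let u : RatFunc ℂ := -(RatFunc.C ζ) * σ Qp * Qp⁻¹ * Lam⁻¹
    let T : RatFunc ℂ := RatFunc.C ζ * σ (σ Qp) / (σ Lam * σ Qp) +
      RatFunc.C ζ⁻¹ * Qp / (Lam * σ Qp)
    !![1, 0; σ u, 1] * !![0, Lam; -Lam⁻¹, Lam * T] * !![1, 0; -u, 1] =
      !![RatFunc.C ζ * σ Qp / Qp, Lam; 0, RatFunc.C ζ⁻¹ * Qp / σ Qp] :=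
  stmt_12_general q ζ hq0 hζ Qp Lam hQp hLam
end

section
/- Let q ∈ ℂ× not a root of unity, ζ ∈ ℂ×, and let Q₊, Q₋, Λ ∈ ℂ(z) be nonzero and satisfy ζ Q₋(z) Q₊(qz) − ζ⁻¹ Q₋(qz) Q₊(z) = Λ(z). Let A(z) be the upper triangular matrix with diagonal (ζ Q₊(qz)/Q₊(z), ζ⁻¹ Q₊(z)/Q₊(qz)) and (1,2)-entry Λ(z), and set μ(z) = 1/(Q₊(z) Q₋(z)). Then e^{μ(qz)F} · A(z) · e^{−μ(z)F} equals the upper triangular matrix with diagonal (ζ⁻¹ Q₋(qz)/Q₋(z), ζ Q₋(z)/Q₋(qz)) and (1,2)-entry Λ(z). -/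
open Polynomial

/-! Multiplying out, the gauge transformation replaces the diagonal `(a, d)` by `(a - Λμ(z), d + μ(qz)Λ)`.
Substituting `Λ` from the QQ-relation, the `ζ Q₊(qz)/Q₊(z)` terms cancel in the first entry and the
`ζ⁻¹ Q₊(z)/Q₊(qz)` terms in the second, leaving the `Q₋`-ratios; the lower-left entry vanishes because
`μ(qz) a = ζ / (Q₊(z) Q₋(qz)) = μ(z) (d + μ(qz)Λ)`. -/

theorem lowerUnitri_mul_upperTri_mul_lowerUnitri {R : Type*} [CommRing R] (m m' a L d : R) :
    !![1, 0; m', 1] * !![a, L; 0, d] * !![1, 0; -m, 1] =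
      !![a - L * m, L; m' * a - (m' * L + d) * m, m' * L + d] := by
  simp only [Matrix.mul_fin_two]
  ring_nf

/-- Here `c, c'` play the roles of `ζ, ζ⁻¹`, and `P, Q, P', Q'` those of `Q₊, Q₋, Q₊(qz), Q₋(qz)`. -/
theorem gauge_swaps_miura {K : Type*} [Field K] (c c' P Q P' Q' : K)
    (hP : P ≠ 0) (hQ : Q ≠ 0) (hP' : P' ≠ 0) (hQ' : Q' ≠ 0) :
    !![1, 0; (P' * Q')⁻¹, 1] *
        !![c * P' / P, c * Q * P' - c' * Q' * P; 0, c' * P / P'] *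
        !![1, 0; -(P * Q)⁻¹, 1] =
      !![c' * Q' / Q, c * Q * P' - c' * Q' * P; 0, c * Q / Q'] := by
  rw [lowerUnitri_mul_upperTri_mul_lowerUnitri]
  have h11 : c * P' / P - (c * Q * P' - c' * Q' * P) * (P * Q)⁻¹ = c' * Q' / Q := by
    field_simp
    ring
  have h22 : (P' * Q')⁻¹ * (c * Q * P' - c' * Q' * P) + c' * P / P' = c * Q / Q' := by
    field_simp
    ring
  have h21 : (P' * Q')⁻¹ * (c * P' / P) -
      ((P' * Q')⁻¹ * (c * Q * P' - c' * Q' * P) + c' * P / P') * (P * Q)⁻¹ = 0 := by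
    rw [h22]
    field_simp
    ring
  rw [h11, h21, h22]

theorem stmt_17_general (q ζ : ℂ) (hq0 : q ≠ 0)
    (Qp Qm Lam : RatFunc ℂ) (hQp : Qp ≠ 0) (hQm : Qm ≠ 0)
    (hQQ : RatFunc.C ζ * Qm * qSubst q hq0 Qp -
      RatFunc.C ζ⁻¹ * qSubst q hq0 Qm * Qp = Lam) :
    let σ := qSubst q hq0
    let μ : RatFunc ℂ := (Qp * Qm)⁻¹
    !![1, 0; σ μ, 1] *
        !![RatFunc.C ζ * σ Qp / Qp, Lam; 0, RatFunc.C ζ⁻¹ * Qp / σ Qp] *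
        !![1, 0; -μ, 1] =
      !![RatFunc.C ζ⁻¹ * σ Qm / Qm, Lam; 0, RatFunc.C ζ * Qm / σ Qm] := by
  intro σ μ
  subst hQQ
  simp only [μ, map_inv₀, map_mul]
  exact gauge_swaps_miura _ _ _ _ _ _ hQp hQm
    ((map_ne_zero σ).mpr hQp) ((map_ne_zero σ).mpr hQm)

theorem stmt_17 (q ζ : ℂ) (hq0 : q ≠ 0) (hq : ∀ n : ℕ, 0 < n → q ^ n ≠ 1) (hζ : ζ ≠ 0)
    (Qp Qm Lam : RatFunc ℂ) (hQp : Qp ≠ 0) (hQm : Qm ≠ 0) (hLam : Lam ≠ 0)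
    (hQQ : RatFunc.C ζ * Qm * qSubst q hq0 Qp -
      RatFunc.C ζ⁻¹ * qSubst q hq0 Qm * Qp = Lam) :
    let σ := qSubst q hq0
    let μ : RatFunc ℂ := (Qp * Qm)⁻¹
    !![1, 0; σ μ, 1] *
        !![RatFunc.C ζ * σ Qp / Qp, Lam; 0, RatFunc.C ζ⁻¹ * Qp / σ Qp] *
        !![1, 0; -μ, 1] =
      !![RatFunc.C ζ⁻¹ * σ Qm / Qm, Lam; 0, RatFunc.C ζ * Qm / σ Qm] :=
  stmt_17_general q ζ hq0 Qp Qm Lam hQp hQm hQQ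
end
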